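/- Let d, n, s be positive integers, s ≥ 2, and H ⊆ V(T_{n,s}) with (s/(s−1))^(w(H)) > Σ_{i=0}^{d−1} C(n,i)/(s−1)^i. Then H contains a replica of T_{d,s}, i.e., there is a regular embedding of T_{d,s} into H. -/

import Mathlib

/-!
Put `x = 1/(s-1)` and let `g(H) = Σ x^|σ|` over the signatures `σ ⊆ {0,…,n-1}` of regular
embeddings of full trees into `H`. Splitting `H` at the root into its subtrees `H_i`, one has
`w(H) = [root ∈ H] + (1/s) Σ w(H_i)`, and the signatures of `H` contain the shifts `σ + 1` of the
signatures of each `H_i` and, if the root lies in `H`, `{0} ∪ (σ + 1)` for every `σ` common to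
all `H_i`. Comparing the two sums and using the convexity of `t ↦ (1 + x)^t`, induction on `n`
gives `(1 + x)^w(H) ≤ g(H)`. Without a replica of `T_{d,s}` every signature has fewer than `d`
elements, so `g(H) ≤ Σ_{i<d} C(n,i) x^i`.
-/

/-- Vertex set of the full `s`-ary tree `T_{n,s}` of depth `n-1`:
strings over an `s`-letter alphabet of length `< n`; the level of a vertex is
its length. -/
def sTreeVerts (s n : ℕ) : Set (List (Fin s)) := {x | x.length < n}

/-- Weight of a set of vertices of the `s`-ary tree:
`w(H) = Σ_{x ∈ H} s^(-level x)`. -/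
noncomputable def sWeight (s : ℕ) (H : Set (List (Fin s))) : ℝ :=
  ∑' x : H, (s : ℝ) ^ (-((x : List (Fin s)).length : ℤ))

/-- `f` is a regular embedding of `T_{d,s}`: equal levels map to equal levels,
and the `s` children of each vertex map to descendants of `s` distinct
children of the image. -/
def IsRegEmbS (s d : ℕ) (f : List (Fin s) → List (Fin s)) : Prop :=
  (∀ x y : List (Fin s), x.length < d → y.length < d → x.length = y.length →
      (f x).length = (f y).length) ∧
  (∀ x : List (Fin s), x.length + 1 < d → ∃ π : Fin s → Fin s,
      Function.Injective π ∧ ∀ i : Fin s, (f x ++ [π i]) <+: f (x ++ [i]))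

/-- `S(H)`: the set of signatures (sets of occupied levels) of all regular
embeddings of some `T_{d,s}`, `d ≥ 0`, into `H`. -/
def sSigs (s : ℕ) (H : Set (List (Fin s))) : Set (Set ℕ) :=
  {σ | ∃ (d : ℕ) (f : List (Fin s) → List (Fin s)), IsRegEmbS s d f ∧
      (∀ x : List (Fin s), x.length < d → f x ∈ H) ∧
      σ = {l : ℕ | ∃ x : List (Fin s), x.length < d ∧ (f x).length = l}}

open Finset
open scoped Classical

variable {s : ℕ}

def treeFinset (s : ℕ) : ℕ → Finset (List (Fin s))
  | 0 => ∅
  | n + 1 => insert [] ((univ ×ˢ treeFinset s n).image fun p => p.1 :: p.2)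

@[simp]
lemma mem_treeFinset {n : ℕ} {x : List (Fin s)} : x ∈ treeFinset s n ↔ x.length < n := by
  induction n generalizing x with
  | zero => simp [treeFinset]
  | succ n ih => cases x <;> simp [treeFinset, ih]

def subtree (H : Set (List (Fin s))) (i : Fin s) : Set (List (Fin s)) := {x | i :: x ∈ H}

noncomputable def weight (s n : ℕ) (H : Set (List (Fin s))) : ℝ :=
  ∑ x ∈ treeFinset s n, H.indicator (fun y => (s : ℝ) ^ (-(y.length : ℤ))) x

lemma sWeight_eq_weight {n : ℕ} {H : Set (List (Fin s))} (hH : H ⊆ sTreeVerts s n) :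
    sWeight s H = weight s n H := by
  rw [sWeight, tsum_subtype H fun x => (s : ℝ) ^ (-(x.length : ℤ))]
  exact tsum_eq_sum fun x hx =>
    Set.indicator_of_notMem (fun hxH => hx (mem_treeFinset.2 (hH hxH))) _

lemma weight_zero (H : Set (List (Fin s))) : weight s 0 H = 0 := by
  simp [weight, treeFinset]

lemma weight_succ (hs : 0 < s) (n : ℕ) (H : Set (List (Fin s))) :
    weight s (n + 1) H = (if [] ∈ H then 1 else 0) + (∑ i, weight s n (subtree H i)) / s := by
  have hs' : (s : ℝ) ≠ 0 := by positivity
  have hcons : ∀ p q : Fin s × List (Fin s), p.1 :: p.2 = q.1 :: q.2 → p = q := fun p q h =>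
    Prod.ext (List.cons_eq_cons.1 h).1 (List.cons_eq_cons.1 h).2
  rw [weight, treeFinset, sum_insert (by simp), sum_image fun p _ q _ => hcons p q, sum_product,
    sum_div]
  congr 1
  refine sum_congr rfl fun i _ => ?_
  rw [weight, sum_div]
  refine sum_congr rfl fun x _ => ?_
  simp only [Set.indicator_apply, subtree, Set.mem_ofPred_eq, List.length_cons]
  split_ifs
  · push_cast
    rw [neg_add, zpow_add₀ hs', zpow_neg_one, div_eq_mul_inv]
  · simp

def embSig (d : ℕ) (f : List (Fin s) → List (Fin s)) : Set ℕ :=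
  {l | ∃ x : List (Fin s), x.length < d ∧ (f x).length = l}

def levelFn (f : List (Fin s) → List (Fin s)) (z : Fin s) (d : ℕ) (j : Fin d) : ℕ :=
  (f (List.replicate j z)).length

namespace IsRegEmbS

variable {d : ℕ} {f : List (Fin s) → List (Fin s)}

lemma mono {d' : ℕ} (hf : IsRegEmbS s d' f) (h : d ≤ d') : IsRegEmbS s d f :=
  ⟨fun x y hx hy => hf.1 x y (hx.trans_le h) (hy.trans_le h), fun x hx => hf.2 x (by omega)⟩

lemma cons (hf : IsRegEmbS s d f) (i : Fin s) : IsRegEmbS s d (fun x => i :: f x) := by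
  refine ⟨fun x y hx hy hxy => by simpa using hf.1 x y hx hy hxy, fun x hx => ?_⟩
  obtain ⟨π, hπ, hpre⟩ := hf.2 x hx
  exact ⟨π, hπ, fun j => List.cons_prefix_cons.2 ⟨rfl, hpre j⟩⟩

lemma length_eq_levelFn (hf : IsRegEmbS s d f) (z : Fin s) {x : List (Fin s)} (hx : x.length < d) :
    (f x).length = levelFn f z d ⟨x.length, hx⟩ :=
  hf.1 x _ hx (by simpa using hx) (by simp)

lemma strictMono_levelFn (hf : IsRegEmbS s d f) (z : Fin s) : StrictMono (levelFn f z d) := by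
  have : StrictMonoOn (fun j => (f (List.replicate j z)).length) (Set.Iio d) := by
    refine strictMonoOn_of_lt_add_one Set.ordConnected_Iio fun j _ _ hj => ?_
    obtain ⟨π, -, hπ⟩ := hf.2 (List.replicate j z) (by simpa using hj)
    have := (hπ z).length_le
    rw [← List.replicate_succ'] at this
    simp only [List.length_append, List.length_singleton] at this
    omega
  exact fun a b hab => this a.2 b.2 hab

lemma range_levelFn (hf : IsRegEmbS s d f) (z : Fin s) :
    Set.range (levelFn f z d) = embSig d f := by
  ext l
  constructor
  · rintro ⟨j, rfl⟩
    exact ⟨List.replicate j z, by simp, rfl⟩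
  · rintro ⟨x, hx, rfl⟩
    exact ⟨⟨x.length, hx⟩, (hf.length_eq_levelFn z hx).symm⟩

lemma card_eq_of_embSig (hf : IsRegEmbS s d f) (hs : 0 < s) {T : Finset ℕ} (hT : ↑T = embSig d f) :
    T.card = d := by
  have hinj := (hf.strictMono_levelFn ⟨0, hs⟩).injective
  rw [← hf.range_levelFn ⟨0, hs⟩, ← Set.image_univ, ← coe_univ, ← coe_image] at hT
  rw [coe_injective hT, card_image_of_injective _ hinj, card_univ, Fintype.card_fin]

end IsRegEmbS

lemma embSig_cons (d : ℕ) (f : List (Fin s) → List (Fin s)) (i : Fin s) :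
    embSig d (fun x => i :: f x) = (· + 1) '' embSig d f := by
  ext l
  simp only [embSig, List.length_cons, Set.mem_image, Set.mem_ofPred_eq]
  constructor
  · rintro ⟨x, hx, rfl⟩
    exact ⟨_, ⟨x, hx, rfl⟩, rfl⟩
  · rintro ⟨_, ⟨x, hx, rfl⟩, rfl⟩
    exact ⟨x, hx, rfl⟩

def graft (f : Fin s → List (Fin s) → List (Fin s)) : List (Fin s) → List (Fin s)
  | [] => []
  | i :: x => i :: f i x

lemma IsRegEmbS.graft {d : ℕ} {f : Fin s → List (Fin s) → List (Fin s)}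
    (hf : ∀ i, IsRegEmbS s d (f i))
    (hlev : ∀ i j x y, x.length < d → x.length = y.length → (f i x).length = (f j y).length) :
    IsRegEmbS s (d + 1) (graft f) := by
  refine ⟨?_, ?_⟩
  · rintro (_ | ⟨i, x⟩) (_ | ⟨j, y⟩) hx - hxy
    · rfl
    · simp at hxy
    · simp at hxy
    · show (i :: f i x).length = (j :: f j y).length
      simpa using hlev i j x y (by simpa using hx) (by simpa using hxy)
  · rintro (_ | ⟨j, t⟩) hx
    · exact ⟨id, Function.injective_id, fun i => List.cons_prefix_cons.2 ⟨rfl, List.nil_prefix⟩⟩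
    · exact ((hf j).cons j).2 t (by simpa using hx)

lemma embSig_graft (hs : 0 < s) {d : ℕ} {f : Fin s → List (Fin s) → List (Fin s)} {σ : Set ℕ}
    (hσ : ∀ i, embSig d (f i) = σ) :
    embSig (d + 1) (graft f) = insert 0 ((· + 1) '' σ) := by
  ext l
  constructor
  · rintro ⟨_ | ⟨i, x⟩, hx, rfl⟩
    · exact Or.inl rfl
    · refine Or.inr ⟨(f i x).length, ?_, rfl⟩
      rw [← hσ i]
      exact ⟨x, by simpa using hx, rfl⟩
  · rintro (rfl | ⟨_, hl, rfl⟩)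
    · exact ⟨[], by simp, rfl⟩
    · rw [← hσ ⟨0, hs⟩] at hl
      obtain ⟨x, hx, rfl⟩ := hl
      exact ⟨⟨0, hs⟩ :: x, by simpa using hx, rfl⟩

variable {H : Set (List (Fin s))}

lemma empty_mem_sSigs : (∅ : Set ℕ) ∈ sSigs s H :=
  ⟨0, id, ⟨fun _ _ hx => absurd hx (Nat.not_lt_zero _), fun _ hx => absurd hx (by omega)⟩,
    fun _ hx => absurd hx (Nat.not_lt_zero _), by simp⟩

lemma mem_sSigs_iff (hs : 0 < s) {T : Finset ℕ} :
    ↑T ∈ sSigs s H ↔ ∃ f, IsRegEmbS s T.card f ∧ (∀ x : List (Fin s), x.length < T.card → f x ∈ H) ∧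
      ↑T = embSig T.card f := by
  constructor
  · rintro ⟨d, f, hf, hH, hT⟩
    obtain rfl := hf.card_eq_of_embSig hs hT
    exact ⟨f, hf, hH, hT⟩
  · rintro ⟨f, hf, hH, hT⟩
    exact ⟨T.card, f, hf, hH, hT⟩

lemma card_lt_of_mem_sSigs (hs : 0 < s) {d : ℕ}
    (hno : ¬∃ f, IsRegEmbS s d f ∧ ∀ x : List (Fin s), x.length < d → f x ∈ H)
    {T : Finset ℕ} (hT : ↑T ∈ sSigs s H) : T.card < d := by
  obtain ⟨f, hf, hH, -⟩ := (mem_sSigs_iff hs).1 hT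
  by_contra! hle
  exact hno ⟨f, hf.mono hle, fun x hx => hH x (hx.trans_le hle)⟩

lemma image_succ_mem_sSigs {i : Fin s} {σ : Set ℕ} (hσ : σ ∈ sSigs s (subtree H i)) :
    (· + 1) '' σ ∈ sSigs s H := by
  obtain ⟨d, f, hf, hH, rfl⟩ := hσ
  exact ⟨d, fun x => i :: f x, hf.cons i, hH, (embSig_cons d f i).symm⟩

lemma insert_zero_image_succ_mem_sSigs (hs : 0 < s) (h0 : [] ∈ H) {T : Finset ℕ}
    (hT : ∀ i, ↑T ∈ sSigs s (subtree H i)) :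
    insert 0 ((· + 1) '' ↑T) ∈ sSigs s H := by
  choose f hf hH hσ using fun i => (mem_sSigs_iff hs).1 (hT i)
  have z : Fin s := ⟨0, hs⟩
  have hlevel : ∀ i j, levelFn (f i) z T.card = levelFn (f j) z T.card := fun i j =>
    ((hf i).strictMono_levelFn z).range_inj ((hf j).strictMono_levelFn z) |>.1 <| by
      rw [(hf i).range_levelFn, (hf j).range_levelFn, ← hσ i, ← hσ j]
  refine ⟨T.card + 1, graft f, IsRegEmbS.graft hf fun i j x y hx hxy => ?_, ?_,
    (embSig_graft hs fun i => (hσ i).symm).symm⟩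
  · rw [(hf i).length_eq_levelFn z hx, (hf j).length_eq_levelFn z (hxy ▸ hx), hlevel i j]
    simp [hxy]
  · rintro (_ | ⟨i, x⟩) hx
    · exact h0
    · exact hH i x (by simpa using hx)

noncomputable def sigTerm (s : ℕ) (H : Set (List (Fin s))) (T : Finset ℕ) : ℝ :=
  if ↑T ∈ sSigs s H then ((s : ℝ) - 1)⁻¹ ^ T.card else 0

noncomputable def sigSum (s n : ℕ) (H : Set (List (Fin s))) : ℝ :=
  ∑ T ∈ (range n).powerset, sigTerm s H T

lemma sigTerm_nonneg (hs : 1 ≤ s) (H : Set (List (Fin s))) (T : Finset ℕ) : 0 ≤ sigTerm s H T := by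
  have : (0 : ℝ) ≤ (s : ℝ) - 1 := by simpa using (Nat.one_le_cast (α := ℝ)).2 hs
  unfold sigTerm
  split_ifs <;> positivity

lemma sigSum_zero : sigSum s 0 H = 1 := by
  simp [sigSum, sigTerm, empty_mem_sSigs]

lemma sigSum_succ (n : ℕ) (H : Set (List (Fin s))) :
    sigSum s (n + 1) H = ∑ T ∈ (range n).powerset,
      (sigTerm s H (T.image (· + 1)) + sigTerm s H (insert 0 (T.image (· + 1)))) := by
  have hrange : range (n + 1) = insert 0 ((range n).image (· + 1)) := by
    rw [range_add_one', map_eq_image]; rfl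
  have hinj := image_injOn_powerset_of_injOn (s := range n) (add_left_injective 1).injOn
  rw [sigSum, hrange, sum_powerset_insert (by simp), powerset_image, sum_image hinj, sum_image hinj,
    sum_add_distrib]

-- `k` counts the subtrees with a given signature, `r` says whether the root lies in `H`.
lemma mul_count_le {k : ℕ} (hs : 2 ≤ s) (hk : k ≤ s) (r : Prop) [Decidable r] :
    (1 + if r then ((s : ℝ) - 1)⁻¹ else 0) / s * k ≤
      (if 0 < k then 1 else 0) + if r ∧ k = s then ((s : ℝ) - 1)⁻¹ else 0 := by
  have hs1 : (1 : ℝ) < s := by exact_mod_cast hs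
  have hs1' : (s : ℝ) - 1 ≠ 0 := by linarith
  rcases Nat.eq_zero_or_pos k with rfl | hk0
  · simp only [CharP.cast_eq_zero, mul_zero, lt_self_iff_false, if_false, zero_add]
    split_ifs <;> positivity
  rw [if_pos hk0]
  by_cases hr : r
  · have hx : (1 + ((s : ℝ) - 1)⁻¹) / s = ((s : ℝ) - 1)⁻¹ := by field_simp; ring
    rw [if_pos hr, hx]
    rcases eq_or_lt_of_le hk with rfl | hlt
    · rw [if_pos ⟨hr, rfl⟩]
      exact le_of_eq (by field_simp; ring)
    · have : (k : ℝ) + 1 ≤ s := by exact_mod_cast hlt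
      rw [if_neg fun h => hlt.ne h.2, add_zero, inv_mul_le_one₀ (by linarith)]
      linarith
  · rw [if_neg hr, if_neg fun h => hr h.1, add_zero, one_div_mul_eq_div, div_le_one (by linarith)]
    exact_mod_cast hk

lemma sigTerm_image_succ {i : Fin s} {T : Finset ℕ} (hT : ↑T ∈ sSigs s (subtree H i)) :
    sigTerm s H (T.image (· + 1)) = ((s : ℝ) - 1)⁻¹ ^ T.card := by
  rw [sigTerm, if_pos (by simpa using image_succ_mem_sSigs hT),
    card_image_of_injective _ (add_left_injective 1)]

lemma sigTerm_insert_zero_image_succ (hs : 0 < s) (h0 : [] ∈ H) {T : Finset ℕ}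
    (hT : ∀ i, ↑T ∈ sSigs s (subtree H i)) :
    sigTerm s H (insert 0 (T.image (· + 1))) = ((s : ℝ) - 1)⁻¹ * ((s : ℝ) - 1)⁻¹ ^ T.card := by
  rw [sigTerm, if_pos (by simpa using insert_zero_image_succ_mem_sSigs hs h0 hT),
    card_insert_of_notMem (by simp), card_image_of_injective _ (add_left_injective 1), pow_succ']

lemma sum_sigTerm_subtree_le (hs : 2 ≤ s) (H : Set (List (Fin s))) (T : Finset ℕ) :
    (1 + if [] ∈ H then ((s : ℝ) - 1)⁻¹ else 0) / s * ∑ i, sigTerm s (subtree H i) T ≤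
      sigTerm s H (T.image (· + 1)) + sigTerm s H (insert 0 (T.image (· + 1))) := by
  set I := univ.filter fun i : Fin s => ↑T ∈ sSigs s (subtree H i)
  have hsum : ∑ i, sigTerm s (subtree H i) T = I.card * ((s : ℝ) - 1)⁻¹ ^ T.card := by
    rw [← nsmul_eq_mul, ← sum_const, sum_filter]
    rfl
  calc _ = ((1 + if [] ∈ H then ((s : ℝ) - 1)⁻¹ else 0) / s * I.card) *
        ((s : ℝ) - 1)⁻¹ ^ T.card := by
        rw [hsum]; ring
    _ ≤ ((if 0 < I.card then 1 else 0) + if [] ∈ H ∧ I.card = s then ((s : ℝ) - 1)⁻¹ else 0) *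
        ((s : ℝ) - 1)⁻¹ ^ T.card :=
      mul_le_mul_of_nonneg_right (mul_count_le hs (card_le_univ I |>.trans (by simp)) _) <| by
        have : (1 : ℝ) < s := by exact_mod_cast hs
        positivity
    _ ≤ _ := by
      rw [add_mul]
      gcongr
      · split_ifs with hI
        · obtain ⟨i, hi⟩ := card_pos.1 hI
          rw [one_mul, sigTerm_image_succ (mem_filter.1 hi).2]
        · simpa using sigTerm_nonneg (by omega) H _
      · split_ifs with hI
        · exact (sigTerm_insert_zero_image_succ (by omega) hI.1 fun i =>
            card_filter_eq_iff.1 (by simpa using hI.2) i (mem_univ i)).ge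
        · simpa using sigTerm_nonneg (by omega) H _

lemma sum_sigSum_subtree_le (hs : 2 ≤ s) (n : ℕ) (H : Set (List (Fin s))) :
    (1 + if [] ∈ H then ((s : ℝ) - 1)⁻¹ else 0) / s * ∑ i, sigSum s n (subtree H i) ≤
      sigSum s (n + 1) H := by
  rw [sigSum_succ]
  simp only [sigSum]
  rw [sum_comm, mul_sum]
  exact sum_le_sum fun T _ => sum_sigTerm_subtree_le hs H T

lemma rpow_sum_div_card_le {ι : Type*} [Fintype ι] [Nonempty ι] {c : ℝ} (hc : 0 < c)
    {a b : ι → ℝ} (hab : ∀ i, c ^ a i ≤ b i) :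
    c ^ ((∑ i, a i) / Fintype.card ι) ≤ (∑ i, b i) / Fintype.card ι := by
  have hcard : (0 : ℝ) < Fintype.card ι := by exact_mod_cast Fintype.card_pos
  have := (convexOn_rpow_left hc).map_sum_le (t := univ) (w := fun _ => (Fintype.card ι : ℝ)⁻¹)
    (p := a) (fun _ _ => by positivity) (by simp [card_univ]) (fun _ _ => Set.mem_univ _)
  simp only [smul_eq_mul, ← mul_sum] at this
  rw [div_eq_inv_mul, div_eq_inv_mul]
  exact this.trans (mul_le_mul_of_nonneg_left (sum_le_sum fun i _ => hab i) (by positivity))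

theorem rpow_weight_le_sigSum (hs : 2 ≤ s) (n : ℕ) (H : Set (List (Fin s))) :
    ((s : ℝ) / ((s : ℝ) - 1)) ^ weight s n H ≤ sigSum s n H := by
  have hs1 : (1 : ℝ) < s := by exact_mod_cast hs
  have hc : 0 < (s : ℝ) / ((s : ℝ) - 1) := div_pos (by linarith) (by linarith)
  induction n generalizing H with
  | zero => simp [weight_zero, sigSum_zero]
  | succ n ih =>
    have hroot : ((s : ℝ) / ((s : ℝ) - 1)) ^ (if [] ∈ H then (1 : ℝ) else 0) =
        1 + if [] ∈ H then ((s : ℝ) - 1)⁻¹ else 0 := by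
      have : (s : ℝ) - 1 ≠ 0 := by linarith
      split_ifs
      · rw [Real.rpow_one]; field_simp; ring
      · simp
    have : NeZero s := ⟨by omega⟩
    have hmean := rpow_sum_div_card_le hc (fun i => ih (subtree H i))
    rw [Fintype.card_fin] at hmean
    calc _ = ((s : ℝ) / ((s : ℝ) - 1)) ^ (if [] ∈ H then (1 : ℝ) else 0) *
          ((s : ℝ) / ((s : ℝ) - 1)) ^ ((∑ i, weight s n (subtree H i)) / s) := by
          rw [weight_succ (by omega), Real.rpow_add hc]
      _ ≤ (1 + if [] ∈ H then ((s : ℝ) - 1)⁻¹ else 0) * ((∑ i, sigSum s n (subtree H i)) / s) := by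
          rw [hroot]
          exact mul_le_mul_of_nonneg_left hmean (by positivity)
      _ = (1 + if [] ∈ H then ((s : ℝ) - 1)⁻¹ else 0) / s * ∑ i, sigSum s n (subtree H i) := by
          ring
      _ ≤ sigSum s (n + 1) H := sum_sigSum_subtree_le hs n H

lemma sigSum_le_of_card_lt (hs : 1 ≤ s) {d n : ℕ}
    (hd : ∀ T : Finset ℕ, ↑T ∈ sSigs s H → T.card < d) :
    sigSum s n H ≤ ∑ i ∈ range d, (n.choose i : ℝ) / ((s : ℝ) - 1) ^ i := by
  have hx : (0 : ℝ) ≤ ((s : ℝ) - 1)⁻¹ := by simpa using (Nat.one_le_cast (α := ℝ)).2 hs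
  calc sigSum s n H
        ≤ ∑ T ∈ (range n).powerset, if T.card < d then ((s : ℝ) - 1)⁻¹ ^ T.card else 0 := by
        refine sum_le_sum fun T _ => ?_
        unfold sigTerm
        split_ifs with hT hlt <;> first | exact le_rfl | positivity | exact absurd (hd T hT) hlt
    _ = ∑ i ∈ range (n + 1) with i < d, (n.choose i : ℝ) * ((s : ℝ) - 1)⁻¹ ^ i := by
        rw [sum_powerset_apply_card (fun m => if m < d then ((s : ℝ) - 1)⁻¹ ^ m else 0), card_range,
          sum_filter]
        simp [nsmul_eq_mul]
    _ ≤ ∑ i ∈ range d, (n.choose i : ℝ) * ((s : ℝ) - 1)⁻¹ ^ i :=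
        sum_le_sum_of_subset_of_nonneg (fun i hi => by simpa using (mem_filter.1 hi).2)
          fun _ _ _ => by positivity
    _ = _ := by simp [div_eq_mul_inv]

theorem stmt11_general (s d n : ℕ) (hs : 2 ≤ s)
    (H : Set (List (Fin s))) (hH : H ⊆ sTreeVerts s n)
    (h : ∑ i ∈ Finset.range d, (n.choose i : ℝ) / ((s : ℝ) - 1) ^ i <
        ((s : ℝ) / ((s : ℝ) - 1)) ^ sWeight s H) :
    ∃ f : List (Fin s) → List (Fin s), IsRegEmbS s d f ∧
      ∀ x : List (Fin s), x.length < d → f x ∈ H := by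
  by_contra hno
  have hupper : sigSum s n H ≤ _ :=
    sigSum_le_of_card_lt (by omega) fun _ => card_lt_of_mem_sSigs (by omega) hno
  have hlower := rpow_weight_le_sigSum hs n H
  rw [← sWeight_eq_weight hH] at hlower
  linarith

/-- If `(s/(s-1))^(w(H)) > Σ_{i=0}^{d-1} C(n,i)/(s-1)^i` then `H ⊆ V(T_{n,s})`
contains a replica of `T_{d,s}`. -/
theorem stmt11 (s d n : ℕ) (hs : 2 ≤ s) (hd : 0 < d) (hn : 0 < n)
    (H : Set (List (Fin s))) (hH : H ⊆ sTreeVerts s n)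
    (h : ∑ i ∈ Finset.range d, (n.choose i : ℝ) / ((s : ℝ) - 1) ^ i <
        ((s : ℝ) / ((s : ℝ) - 1)) ^ sWeight s H) :
    ∃ f : List (Fin s) → List (Fin s), IsRegEmbS s d f ∧
      ∀ x : List (Fin s), x.length < d → f x ∈ H :=
  stmt11_general s d n hs H hH h
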